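/- arXiv:2005.01997 — 5 statements merged into one kernel-verified Lean document; each statement's English description precedes it below -/
import Mathlib

section
/- Let X^l, X^f, A be finite sets and let π_t on X^l × X^f factor as a product π_t(x^l, x^f) = π_t^l(x^l) · π_t^f(x^f) of probability distributions. Let γ_t^l : X^l → Δ(A^l), γ_t^f : X^f → Δ(A^f) be behavioral strategies and Q^l : X^l × A → Δ(X^l), Q^f : X^f × A → Δ(X^f) be transition kernels, where A = A^l × A^f. Fix an action a = (a^l, a^f) ∈ A with Σ_{x^l} π_t^l(x^l) γ_t^l(a^l | x^l) > 0 and Σ_{x^f} π_t^f(x^f) γ_t^f(a^f | x^f) > 0. Then the updated distribution π_{t+1}(x_{t+1}) = (Σ_{x_t} π_t(x_t) γ_t^l(a^l|x_t^l) γ_t^f(a^f|x_t^f) Q^l(x_{t+1}^l|x_t^l,a) Q^f(x_{t+1}^f|x_t^f,a)) / (Σ_{x̃_t, x̃_{t+1}} π_t(x̃_t) γ_t^l(a^l|x̃_t^l) γ_t^f(a^f|x̃_t^f) Q^l(x̃_{t+1}^l|x̃_t^l,a) Q^f(x̃_{t+1}^f|x̃_t^f,a)) again factors as a product π_{t+1}^l(x^l)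 · π_{t+1}^f(x^f), where π_{t+1}^i(x_{t+1}^i) = (Σ_{x_t^i} π_t^i(x_t^i) γ_t^i(a^i|x_t^i) Q^i(x_{t+1}^i|x_t^i, a)) / (Σ_{x̃_t^i} π_t^i(x̃_t^i) γ_t^i(a^i|x̃_t^i)). -/
open Finset

/-- Belief factorization under Bayesian updating.
If the belief on the joint state is a product of marginals, then after observing a joint
action of positive probability, the Bayes-updated joint belief is again a product of the
per-player Bayes-updated marginals. -/
theorem belief_update_factorizes
    {Xl Xf Al Af : Type} [Fintype Xl] [Fintype Xf] [Fintype Al] [Fintype Af]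
    (πl : Xl → ℝ) (πf : Xf → ℝ)
    (hπl : (∀ x, 0 ≤ πl x) ∧ ∑ x, πl x = 1)
    (hπf : (∀ x, 0 ≤ πf x) ∧ ∑ x, πf x = 1)
    (γl : Xl → Al → ℝ) (γf : Xf → Af → ℝ)
    (hγl : ∀ x, (∀ a, 0 ≤ γl x a) ∧ ∑ a, γl x a = 1)
    (hγf : ∀ x, (∀ a, 0 ≤ γf x a) ∧ ∑ a, γf x a = 1)
    (Ql : Xl → Al × Af → Xl → ℝ) (Qf : Xf → Al × Af → Xf → ℝ)
    (hQl : ∀ x a, (∀ x', 0 ≤ Ql x a x') ∧ ∑ x', Ql x a x' = 1)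
    (hQf : ∀ x a, (∀ x', 0 ≤ Qf x a x') ∧ ∑ x', Qf x a x' = 1)
    (al : Al) (af : Af)
    (hdl : 0 < ∑ x, πl x * γl x al)
    (hdf : 0 < ∑ x, πf x * γf x af) :
    ∀ (xl' : Xl) (xf' : Xf),
      (∑ xl, ∑ xf, πl xl * πf xf * γl xl al * γf xf af *
          Ql xl (al, af) xl' * Qf xf (al, af) xf') /
        (∑ xl, ∑ xf, ∑ yl, ∑ yf, πl xl * πf xf * γl xl al * γf xf af *
          Ql xl (al, af) yl * Qf xf (al, af) yf)
      = ((∑ xl, πl xl * γl xl al * Ql xl (al, af) xl') / (∑ xl, πl xl * γl xl al)) *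
        ((∑ xf, πf xf * γf xf af * Qf xf (al, af) xf') / (∑ xf, πf xf * γf xf af)) := by
  intro xl' xf'
  have hnum : (∑ xl, ∑ xf, πl xl * πf xf * γl xl al * γf xf af *
      Ql xl (al, af) xl' * Qf xf (al, af) xf')
      = (∑ xl, πl xl * γl xl al * Ql xl (al, af) xl') *
        (∑ xf, πf xf * γf xf af * Qf xf (al, af) xf') := by
    rw [Finset.sum_mul_sum]
    exact Finset.sum_congr rfl fun xl _ => Finset.sum_congr rfl fun xf _ => by ring
  have hden : (∑ xl, ∑ xf, ∑ yl, ∑ yf, πl xl * πf xf * γl xl al * γf xf af *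
      Ql xl (al, af) yl * Qf xf (al, af) yf)
      = (∑ xl, πl xl * γl xl al) * (∑ xf, πf xf * γf xf af) := by
    have : ∀ xl xf, (∑ yl, ∑ yf, πl xl * πf xf * γl xl al * γf xf af *
        Ql xl (al, af) yl * Qf xf (al, af) yf)
        = (πl xl * γl xl al) * (πf xf * γf xf af) := by
      intro xl xf
      have h1 : (∑ yl, ∑ yf, πl xl * πf xf * γl xl al * γf xf af *
          Ql xl (al, af) yl * Qf xf (al, af) yf)
          = (πl xl * γl xl al) * (πf xf * γf xf af) *
            ((∑ yl, Ql xl (al, af) yl) * (∑ yf, Qf xf (al, af) yf)) := by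
        rw [Finset.sum_mul_sum, Finset.mul_sum]
        exact Finset.sum_congr rfl fun yl _ => by
          rw [Finset.mul_sum]; exact Finset.sum_congr rfl fun yf _ => by ring
      rw [h1, (hQl xl (al, af)).2, (hQf xf (al, af)).2, mul_one, mul_one]
    calc (∑ xl, ∑ xf, ∑ yl, ∑ yf, πl xl * πf xf * γl xl al * γf xf af *
          Ql xl (al, af) yl * Qf xf (al, af) yf)
        = ∑ xl, ∑ xf, (πl xl * γl xl al) * (πf xf * γf xf af) :=
          Finset.sum_congr rfl fun xl _ => Finset.sum_congr rfl fun xf _ => this xl xf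
      _ = (∑ xl, πl xl * γl xl al) * (∑ xf, πf xf * γf xf af) := by
          rw [Finset.sum_mul_sum]
  rw [hnum, hden, div_mul_div_comm]
end

section
/- Consider N players with finite type spaces X^i and finite action spaces A^i. Types evolve conditionally independently: X_1^i ∼ Q_1^i and X_{n+1}^i ∼ Q_{n+1}^i(· | X_n^i, A_n), where A_n = (A_n^1,...,A_n^N). Player i's action at time n is generated as A_n^i ∼ g_n^i(· | a_{1:n-1}, x_{1:n}^i), i.e., each player's strategy depends only on the common action history and its own private type history. Then for every time t and action history a_{1:t-1} with positive probability, the conditional distribution of the joint type histories factorizes across players: P^g(x_{1:t}^1, ..., x_{1:t}^N | a_{1:t-1}) = ∏_{i=1}^N P^{g^i}(x_{1:t}^i | a_{1:t-1}), where P^{g^i}(x_{1:t}^i | a_{1:t-1}) = (Q_1^i(x_1^i) g_1^i(a_1^i|x_1^i) ∏_{n=2}^t Q_n^i(x_n^i|x_{n-1}^i, a_{n-1}) g_n^i(a_n^i|a_{1:n-1}, x_{1:n}^i)) / (Σ_{x̄_{1:t}^i} [same expression with x̄]). -/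
open Finset

/-- Conditional independence of private type histories given the common action
history.  States are indexed 0,…,t (so there are t+1 of them), actions 0,…,t−1.  `Num i xi`
is player i's unnormalized likelihood (the product formula) of its type history `xi` together
with the fixed action history `a`; the joint conditional of the type histories given the
action history equals the product of the per-player conditionals. -/
theorem conditional_independence_of_types
    {N : ℕ} (X A : Fin N → Type)
    [∀ i, Fintype (X i)] [∀ i, Fintype (A i)]
    (t : ℕ)
    (Q1 : ∀ i, X i → ℝ)
    (Q : ∀ i, Fin t → X i → (∀ j, A j) → X i → ℝ)
    (g : ∀ i, (n : Fin t) → (Fin (n : ℕ) → ∀ j, A j) → (Fin ((n : ℕ) + 1) → X i) →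
      A i → ℝ)
    (a : Fin t → ∀ j, A j)
    (Num : ∀ i, (Fin (t + 1) → X i) → ℝ)
    (hNum : ∀ i xi, Num i xi =
      Q1 i (xi 0) *
        ∏ n : Fin t,
          (g i n (fun m => a (Fin.castLE n.isLt.le m))
              (fun m => xi (Fin.castLE (Nat.succ_le_succ n.isLt.le) m)) (a n i) *
            Q i n (xi n.castSucc) (a n) (xi n.succ)))
    (hpos : 0 < ∑ xb : ∀ i, Fin (t + 1) → X i, ∏ i, Num i (xb i)) :
    ∀ x : ∀ i, Fin (t + 1) → X i,
      (∏ i, Num i (x i)) / (∑ xb : ∀ i, Fin (t + 1) → X i, ∏ i, Num i (xb i))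
        = ∏ i, (Num i (x i) / ∑ xbi : Fin (t + 1) → X i, Num i xbi) := by
  intro x
  rw [show (∑ xb : ∀ i, Fin (t + 1) → X i, ∏ i, Num i (xb i))
      = ∏ i, ∑ xbi : Fin (t + 1) → X i, Num i xbi from (Fintype.prod_sum _).symm,
    ← Finset.prod_div_distrib]
end

section
/- Let T ∈ ℕ, and for t = 1,…,T+1 let V_t : B × X^f → ℝ be functions with V_{T+1} ≡ 0, where B is a set of belief pairs and X^f a finite set. Suppose a strategy profile (σ̃^f, σ̃^l) and belief system µ satisfy, for all t and all histories h_t^f = (a_{1:t-1}, x_{1:t}^f): (i) V_t(µ_t[a_{1:t-1}], x_t^f) = E^{σ̃^f σ̃^l}[ R_t^f(X_t,A_t) + V_{t+1}(µ_{t+1}[a_{1:t-1} A_t], X_{t+1}^f) | h_t^f ]; (ii) for every one-stage deviation σ_t^f, V_t(µ_t[a_{1:t-1}], x_t^f) ≥ E^{σ_t^f σ̃^l}[ R_t^f(X_t,A_t) + V_{t+1}(µ_{t+1}[a_{1:t-1} A_t], X_{t+1}^f) | h_t^f ]; and (iii) for every t and every σ^f, the conditional expectation of Σ_{n=t+1}^T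 R_n^f given (a_{1:t}, x_{1:t+1}^f) under (σ_{t:T}^f, σ̃_{t:T}^l) does not depend on σ_t^f. Then for all t, all histories, and all follower strategies σ^f, E^{σ̃^f σ̃^l}[ Σ_{n=t}^T R_n^f(X_n,A_n) | h_t^f ] ≥ E^{σ^f σ̃^l}[ Σ_{n=t}^T R_n^f(X_n,A_n) | h_t^f ], i.e., σ̃^f is a best response to σ̃^l at every follower history. -/
/-!
Backward induction on the stage `t`. Averaging the reward-to-go against the belief `μ t a` and
peeling off stage `t` gives a one-stage Bellman expression whose continuation, by (iii), is again
a belief-averaged reward-to-go from stage `t + 1`. Along `σtf` this continuation is `V (t + 1)`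
by induction, so (i) identifies the whole value with `V t`; for any other strategy it is at most
`V (t + 1)`, and (ii) bounds the resulting one-stage deviation by `V t`.
-/

open Finset

noncomputable section

/-- Update a trajectory at one time index. -/
def upd {α : Type} (h : ℕ → α) (t : ℕ) (v : α) : ℕ → α :=
  fun n => if n = t then v else h n

/-- Follower reward-to-go: expected total reward over `k` remaining stages starting at time
`t`, given the action history `a`, the follower type history `xfh`, and the current leader
type `xl`; the leader plays the (Markov) strategy `σl` and the follower the (history-based)
strategy `σf`; types evolve via the kernels `Ql`, `Qf`. -/
def rtgF {Xl Xf Al Af : Type} [Fintype Xl] [Fintype Xf] [Fintype Al] [Fintype Af]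
    (σl : ℕ → (ℕ → Al × Af) → Xl → Al → ℝ)
    (σf : ℕ → (ℕ → Al × Af) → (ℕ → Xf) → Af → ℝ)
    (Ql : Xl → Al × Af → Xl → ℝ) (Qf : Xf → Al × Af → Xf → ℝ)
    (Rf : ℕ → Xl × Xf → Al × Af → ℝ) :
    ℕ → ℕ → (ℕ → Al × Af) → (ℕ → Xf) → Xl → ℝ
  | 0, _, _, _, _ => 0
  | k + 1, t, a, xfh, xl =>
      ∑ al : Al, ∑ af : Af, σl t a xl al * σf t a xfh af *
        (Rf t (xl, xfh t) (al, af) +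
          ∑ xl' : Xl, ∑ xf' : Xf, Ql xl (al, af) xl' * Qf (xfh t) (al, af) xf' *
            rtgF σl σf Ql Qf Rf k (t + 1) (upd a t (al, af)) (upd xfh (t + 1) xf') xl')

lemma upd_self {α : Type} (h : ℕ → α) (t : ℕ) (v : α) : upd h t v t = v := if_pos rfl

-- One-stage tower property: `C i j y` is the continuation given `(i, j, y)`, with the next
-- leader type `x'` averaged out.
lemma sum_sum_sum_eq_of_conditional {X I J Y : Type*} [Fintype X] [Fintype I] [Fintype J]
    [Fintype Y] (w : X → I → ℝ) (q : J → ℝ) (r : X → I → J → ℝ) (P : X → I → J → X → ℝ)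
    (Q : I → J → Y → ℝ) (g : I → J → Y → X → ℝ) (C : I → J → Y → ℝ)
    (hC : ∀ i j y, ∑ x, ∑ x', w x i * P x i j x' * g i j y x' = (∑ x, w x i) * C i j y) :
    ∑ x, ∑ i, ∑ j, w x i * q j * (r x i j + ∑ x', ∑ y, P x i j x' * Q i j y * g i j y x') =
      ∑ x, ∑ i, ∑ j, w x i * q j * (r x i j + ∑ y, Q i j y * C i j y) := by
  have hcont : ∀ i j, ∑ x, w x i * q j * ∑ x', ∑ y, P x i j x' * Q i j y * g i j y x' =
      ∑ x, w x i * q j * ∑ y, Q i j y * C i j y := fun i j =>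
    calc ∑ x, w x i * q j * ∑ x', ∑ y, P x i j x' * Q i j y * g i j y x'
        = q j * ∑ y, Q i j y * ∑ x, ∑ x', w x i * P x i j x' * g i j y x' := by
          simp only [mul_sum]
          conv_rhs => rw [sum_comm]
          refine sum_congr rfl fun x _ => ?_
          rw [sum_comm]
          exact sum_congr rfl fun y _ => sum_congr rfl fun x' _ => by ring
      _ = q j * ∑ y, Q i j y * ((∑ x, w x i) * C i j y) := by simp only [hC]
      _ = ∑ x, w x i * q j * ∑ y, Q i j y * C i j y := by
          simp only [mul_sum, sum_mul]
          rw [sum_comm]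
          refine sum_congr rfl fun x _ => sum_congr rfl fun y _ => by ring
  rw [sum_comm, sum_comm (γ := X)]
  refine sum_congr rfl fun i _ => ?_
  rw [sum_comm, sum_comm (γ := X)]
  refine sum_congr rfl fun j _ => ?_
  simp only [mul_add, sum_add_distrib, hcont]

section Stage

variable {Xl Xf Al Af : Type} [Fintype Xl] [Fintype Xf] [Fintype Al] [Fintype Af]
  (σl : ℕ → (ℕ → Al × Af) → Xl → Al → ℝ) (Qf : Xf → Al × Af → Xf → ℝ)
  (Rf : ℕ → Xl × Xf → Al × Af → ℝ)

-- The right-hand side of (i) and (ii), for a belief `w` on the leader type, a follower mixed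
-- action `q` and a continuation `c al af xf'`.
def stageValue (w : Xl → ℝ) (t : ℕ) (a : ℕ → Al × Af) (xf : Xf) (q : Af → ℝ)
    (c : Al → Af → Xf → ℝ) : ℝ :=
  ∑ xl, ∑ al, ∑ af, w xl * σl t a xl al * q af *
    (Rf t (xl, xf) (al, af) + ∑ xf', Qf xf (al, af) xf' * c al af xf')

variable {σl Qf Rf}

lemma stageValue_mono {w : Xl → ℝ} {t : ℕ} {a : ℕ → Al × Af} {xf : Xf} {q : Af → ℝ}
    {c c' : Al → Af → Xf → ℝ} (hw : ∀ xl, 0 ≤ w xl) (hσl : ∀ xl al, 0 ≤ σl t a xl al)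
    (hq : ∀ af, 0 ≤ q af) (hQf : ∀ u xf', 0 ≤ Qf xf u xf')
    (hc : ∀ al af xf', c al af xf' ≤ c' al af xf') :
    stageValue σl Qf Rf w t a xf q c ≤ stageValue σl Qf Rf w t a xf q c' := by
  unfold stageValue
  gcongr with xl _ al _ af _ xf' _
  · exact mul_nonneg (mul_nonneg (hw xl) (hσl xl al)) (hq af)
  · exact hQf _ _
  · exact hc al af xf'

lemma sum_mul_rtgF_succ_eq_stageValue {σf : ℕ → (ℕ → Al × Af) → (ℕ → Xf) → Af → ℝ}
    {Ql : Xl → Al × Af → Xl → ℝ} {w : Xl → ℝ} {k t : ℕ} {a : ℕ → Al × Af} {xfh : ℕ → Xf}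
    {C : Al → Af → Xf → ℝ}
    (hC : ∀ al af xf', ∑ xl, ∑ xl', w xl * σl t a xl al * Ql xl (al, af) xl' *
        rtgF σl σf Ql Qf Rf k (t + 1) (upd a t (al, af)) (upd xfh (t + 1) xf') xl' =
      (∑ xl, w xl * σl t a xl al) * C al af xf') :
    ∑ xl, w xl * rtgF σl σf Ql Qf Rf (k + 1) t a xfh xl =
      stageValue σl Qf Rf w t a (xfh t) (σf t a xfh) C := by
  simp only [rtgF, mul_sum, ← mul_assoc]
  exact sum_sum_sum_eq_of_conditional (fun xl al => w xl * σl t a xl al) _ _ _ _ _ _ hC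

end Stage

theorem follower_verification_general
    {Xl Xf Al Af : Type} [Fintype Xl] [Fintype Xf] [Fintype Al] [Fintype Af]
    (T : ℕ)
    (σl : ℕ → (ℕ → Al × Af) → Xl → Al → ℝ)
    (σtf : ℕ → (ℕ → Al × Af) → (ℕ → Xf) → Af → ℝ)
    (Ql : Xl → Al × Af → Xl → ℝ) (Qf : Xf → Al × Af → Xf → ℝ)
    (Rf : ℕ → Xl × Xf → Al × Af → ℝ)
    (μ : ℕ → (ℕ → Al × Af) → Xl → ℝ)
    (V : ℕ → (ℕ → Al × Af) → Xf → ℝ)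
    -- probability hypotheses
    (hμ : ∀ t a, (∀ xl, 0 ≤ μ t a xl) ∧ ∑ xl, μ t a xl = 1)
    (hσl : ∀ t a xl, (∀ al, 0 ≤ σl t a xl al) ∧ ∑ al, σl t a xl al = 1)
    (hσtf : ∀ t a xfh, (∀ af, 0 ≤ σtf t a xfh af) ∧ ∑ af, σtf t a xfh af = 1)
    (hQf : ∀ x u, (∀ x', 0 ≤ Qf x u x') ∧ ∑ x', Qf x u x' = 1)
    -- terminal condition
    (hVT : ∀ a xf, V T a xf = 0)
    -- (i) one-stage Bellman equality along the equilibrium strategy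
    (hi : ∀ t, t < T → ∀ (a : ℕ → Al × Af) (xfh : ℕ → Xf),
      V t a (xfh t) =
        ∑ xl : Xl, ∑ al : Al, ∑ af : Af,
          μ t a xl * σl t a xl al * σtf t a xfh af *
            (Rf t (xl, xfh t) (al, af) +
              ∑ xf' : Xf, Qf (xfh t) (al, af) xf' * V (t + 1) (upd a t (al, af)) xf'))
    -- (ii) one-stage deviation inequality
    (hii : ∀ t, t < T → ∀ (a : ℕ → Al × Af) (xfh : ℕ → Xf) (q : Af → ℝ),
      (∀ af, 0 ≤ q af) → (∑ af, q af = 1) →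
      (∑ xl : Xl, ∑ al : Al, ∑ af : Af,
          μ t a xl * σl t a xl al * q af *
            (Rf t (xl, xfh t) (al, af) +
              ∑ xf' : Xf, Qf (xfh t) (al, af) xf' * V (t + 1) (upd a t (al, af)) xf'))
        ≤ V t a (xfh t))
    -- (iii) strategy-independence of the continuation payoff: conditioning the
    -- time-(t+1) continuation on (a_{1:t}, x_{1:t+1}^f) and restarting it from the
    -- updated belief μ_{t+1} give the same value, for every follower strategy
    (hiii : ∀ (σf : ℕ → (ℕ → Al × Af) → (ℕ → Xf) → Af → ℝ),
      (∀ t a xfh, (∀ af, 0 ≤ σf t a xfh af) ∧ ∑ af, σf t a xfh af = 1) →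
      ∀ t, t < T → ∀ (a : ℕ → Al × Af) (xfh : ℕ → Xf) (al : Al) (af : Af) (xf' : Xf),
      (∑ xl : Xl, ∑ xl' : Xl, μ t a xl * σl t a xl al * Ql xl (al, af) xl' *
          rtgF σl σf Ql Qf Rf (T - (t + 1)) (t + 1)
            (upd a t (al, af)) (upd xfh (t + 1) xf') xl')
        = (∑ xl : Xl, μ t a xl * σl t a xl al) *
          ∑ xl' : Xl, μ (t + 1) (upd a t (al, af)) xl' *
            rtgF σl σf Ql Qf Rf (T - (t + 1)) (t + 1)
              (upd a t (al, af)) (upd xfh (t + 1) xf') xl') :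
    -- conclusion: σtf is a best response at every follower history
    ∀ (σf : ℕ → (ℕ → Al × Af) → (ℕ → Xf) → Af → ℝ),
      (∀ t a xfh, (∀ af, 0 ≤ σf t a xfh af) ∧ ∑ af, σf t a xfh af = 1) →
      ∀ t, t ≤ T → ∀ (a : ℕ → Al × Af) (xfh : ℕ → Xf),
        (∑ xl, μ t a xl * rtgF σl σf Ql Qf Rf (T - t) t a xfh xl)
          ≤ ∑ xl, μ t a xl * rtgF σl σtf Ql Qf Rf (T - t) t a xfh xl := by
  intro σf hσf
  have peel_stage : ∀ σ : ℕ → (ℕ → Al × Af) → (ℕ → Xf) → Af → ℝ,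
      (∀ t a xfh, (∀ af, 0 ≤ σ t a xfh af) ∧ ∑ af, σ t a xfh af = 1) →
      ∀ t, t < T → ∀ a xfh,
        ∑ xl, μ t a xl * rtgF σl σ Ql Qf Rf (T - t) t a xfh xl =
          stageValue σl Qf Rf (μ t a) t a (xfh t) (σ t a xfh) fun al af xf' =>
            ∑ xl', μ (t + 1) (upd a t (al, af)) xl' *
              rtgF σl σ Ql Qf Rf (T - (t + 1)) (t + 1) (upd a t (al, af)) (upd xfh (t + 1) xf') xl' := by
    intro σ hσ t ht a xfh
    rw [show T - t = T - (t + 1) + 1 by omega]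
    exact sum_mul_rtgF_succ_eq_stageValue (hiii σ hσ t ht a xfh)
  have value_eq : ∀ t (ht : t ≤ T) a xfh,
      ∑ xl, μ t a xl * rtgF σl σtf Ql Qf Rf (T - t) t a xfh xl = V t a (xfh t) := by
    intro t ht
    induction ht using Nat.decreasingInduction with
    | self => simp [rtgF, hVT]
    | of_succ t ht ih =>
      intro a xfh
      rw [peel_stage σtf hσtf t ht a xfh, hi t ht a xfh]
      simp only [stageValue, ih, upd_self]
  have value_le : ∀ t (ht : t ≤ T) a xfh,
      ∑ xl, μ t a xl * rtgF σl σf Ql Qf Rf (T - t) t a xfh xl ≤ V t a (xfh t) := by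
    intro t ht
    induction ht using Nat.decreasingInduction with
    | self => simp [rtgF, hVT]
    | of_succ t ht ih =>
      intro a xfh
      rw [peel_stage σf hσf t ht a xfh]
      refine le_trans ?_ (hii t ht a xfh _ (hσf t a xfh).1 (hσf t a xfh).2)
      refine stageValue_mono (hμ t a).1 (fun xl => (hσl t a xl).1) (hσf t a xfh).1
        (fun u => (hQf _ u).1) fun al af xf' => ?_
      simpa only [upd_self] using ih (upd a t (al, af)) (upd xfh (t + 1) xf')
  intro t ht a xfh
  exact (value_le t ht a xfh).trans (value_eq t ht a xfh).ge

/-- backward-induction verification theorem (follower part of the main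
theorem).  If the value functions satisfy (i) the Bellman equality along the equilibrium
strategy, (ii) the Bellman inequality against every one-stage deviation, and (iii) the
continuation payoff from `t+1` on, conditioned on the stage-`t` action and next follower
type, coincides with the payoff restarted from the updated belief (hence does not depend on
the time-`t` follower strategy), then the equilibrium follower strategy `σtf` is a best
response to the leader strategy `σl` at every follower history. -/
theorem follower_verification
    {Xl Xf Al Af : Type} [Fintype Xl] [Fintype Xf] [Fintype Al] [Fintype Af]
    (T : ℕ)
    (σl : ℕ → (ℕ → Al × Af) → Xl → Al → ℝ)
    (σtf : ℕ → (ℕ → Al × Af) → (ℕ → Xf) → Af → ℝ)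
    (Ql : Xl → Al × Af → Xl → ℝ) (Qf : Xf → Al × Af → Xf → ℝ)
    (Rf : ℕ → Xl × Xf → Al × Af → ℝ)
    (μ : ℕ → (ℕ → Al × Af) → Xl → ℝ)
    (V : ℕ → (ℕ → Al × Af) → Xf → ℝ)
    -- probability hypotheses
    (hμ : ∀ t a, (∀ xl, 0 ≤ μ t a xl) ∧ ∑ xl, μ t a xl = 1)
    (hσl : ∀ t a xl, (∀ al, 0 ≤ σl t a xl al) ∧ ∑ al, σl t a xl al = 1)
    (hσtf : ∀ t a xfh, (∀ af, 0 ≤ σtf t a xfh af) ∧ ∑ af, σtf t a xfh af = 1)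
    (hQl : ∀ x u, (∀ x', 0 ≤ Ql x u x') ∧ ∑ x', Ql x u x' = 1)
    (hQf : ∀ x u, (∀ x', 0 ≤ Qf x u x') ∧ ∑ x', Qf x u x' = 1)
    -- terminal condition
    (hVT : ∀ a xf, V T a xf = 0)
    -- (i) one-stage Bellman equality along the equilibrium strategy
    (hi : ∀ t, t < T → ∀ (a : ℕ → Al × Af) (xfh : ℕ → Xf),
      V t a (xfh t) =
        ∑ xl : Xl, ∑ al : Al, ∑ af : Af,
          μ t a xl * σl t a xl al * σtf t a xfh af *
            (Rf t (xl, xfh t) (al, af) +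
              ∑ xf' : Xf, Qf (xfh t) (al, af) xf' * V (t + 1) (upd a t (al, af)) xf'))
    -- (ii) one-stage deviation inequality
    (hii : ∀ t, t < T → ∀ (a : ℕ → Al × Af) (xfh : ℕ → Xf) (q : Af → ℝ),
      (∀ af, 0 ≤ q af) → (∑ af, q af = 1) →
      (∑ xl : Xl, ∑ al : Al, ∑ af : Af,
          μ t a xl * σl t a xl al * q af *
            (Rf t (xl, xfh t) (al, af) +
              ∑ xf' : Xf, Qf (xfh t) (al, af) xf' * V (t + 1) (upd a t (al, af)) xf'))
        ≤ V t a (xfh t))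
    -- (iii) strategy-independence of the continuation payoff: conditioning the
    -- time-(t+1) continuation on (a_{1:t}, x_{1:t+1}^f) and restarting it from the
    -- updated belief μ_{t+1} give the same value, for every follower strategy
    (hiii : ∀ (σf : ℕ → (ℕ → Al × Af) → (ℕ → Xf) → Af → ℝ),
      (∀ t a xfh, (∀ af, 0 ≤ σf t a xfh af) ∧ ∑ af, σf t a xfh af = 1) →
      ∀ t, t < T → ∀ (a : ℕ → Al × Af) (xfh : ℕ → Xf) (al : Al) (af : Af) (xf' : Xf),
      (∑ xl : Xl, ∑ xl' : Xl, μ t a xl * σl t a xl al * Ql xl (al, af) xl' *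
          rtgF σl σf Ql Qf Rf (T - (t + 1)) (t + 1)
            (upd a t (al, af)) (upd xfh (t + 1) xf') xl')
        = (∑ xl : Xl, μ t a xl * σl t a xl al) *
          ∑ xl' : Xl, μ (t + 1) (upd a t (al, af)) xl' *
            rtgF σl σf Ql Qf Rf (T - (t + 1)) (t + 1)
              (upd a t (al, af)) (upd xfh (t + 1) xf') xl') :
    -- conclusion: σtf is a best response at every follower history
    ∀ (σf : ℕ → (ℕ → Al × Af) → (ℕ → Xf) → Af → ℝ),
      (∀ t a xfh, (∀ af, 0 ≤ σf t a xfh af) ∧ ∑ af, σf t a xfh af = 1) →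
      ∀ t, t ≤ T → ∀ (a : ℕ → Al × Af) (xfh : ℕ → Xf),
        (∑ xl, μ t a xl * rtgF σl σf Ql Qf Rf (T - t) t a xfh xl)
          ≤ ∑ xl, μ t a xl * rtgF σl σtf Ql Qf Rf (T - t) t a xfh xl :=
  follower_verification_general T σl σtf Ql Qf Rf μ V hμ hσl hσtf hQf hVT hi hii hiii

end
end

section
/- Under the setup of the sequential decomposition algorithm (finite X^l, X^f, A^l, A^f; horizon T; value functions V_t^f defined by the backward recursion V_{T+1}^f ≡ 0 and V_t^f(π, x^f) = E^{γ̃_t^f(·|x^f) γ̃_t^l, π}[ R_t^f(X_t,A_t) + V_{t+1}^f(F(π, γ̃_t, A_t), X_{t+1}^f) | x^f ] with γ̃_t = θ_t[π]; strategies σ̃ and beliefs µ defined by the forward recursion σ̃_t^i(a_t^i | a_{1:t-1}, x_{1:t}^i) = θ_t^i[µ_t[a_{1:t-1}]](a_t^i | x_t^i) and µ_{t+1} = F(µ_t, θ_t[µ_t], a_t)), it holds for every t and every follower history (a_{1:t-1}, x_{1:t}^f) that V_t^f(µ_t[a_{1:t-1}], x_t^f) = E^{σ̃_{t:T}^f σ̃_{t:T}^l,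 µ_t[a_{1:t-1}]}[ Σ_{n=t}^T R_n^f(X_n, A_n) | a_{1:t-1}, x_{1:t}^f ]. -/
open Finset

noncomputable section

/-- The backward recursion of the algorithm: value of the follower over `k` remaining stages
at belief pair `b`, when both players use the prescriptions generated by `θl, θf` and the
belief updates via the strategy-independent map `F`. -/
def Vrec {Xl Xf Al Af : Type} [Fintype Xl] [Fintype Xf] [Fintype Al] [Fintype Af]
    (θl : ℕ → ((Xl → ℝ) × (Xf → ℝ)) → Xl → Al → ℝ)
    (θf : ℕ → ((Xl → ℝ) × (Xf → ℝ)) → Xf → Af → ℝ)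
    (F : ((Xl → ℝ) × (Xf → ℝ)) → (Xl → Al → ℝ) → (Xf → Af → ℝ) → (Al × Af) →
      ((Xl → ℝ) × (Xf → ℝ)))
    (Qf : Xf → Al × Af → Xf → ℝ)
    (Rf : ℕ → Xl × Xf → Al × Af → ℝ) :
    ℕ → ℕ → ((Xl → ℝ) × (Xf → ℝ)) → Xf → ℝ
  | 0, _, _, _ => 0
  | k + 1, t, b, xf =>
      ∑ xl : Xl, ∑ al : Al, ∑ af : Af, b.1 xl * θl t b xl al * θf t b xf af *
        (Rf t (xl, xf) (al, af) +
          ∑ xf' : Xf, Qf xf (al, af) xf' *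
            Vrec θl θf F Qf Rf k (t + 1) (F b (θl t b) (θf t b) (al, af)) xf')

/-- The forward recursion for beliefs: `μbel b0 a t` is the belief pair after the action
history `a` up to (but not including) time `t`, starting from `b0`. -/
def μbel {Xl Xf Al Af : Type}
    (θl : ℕ → ((Xl → ℝ) × (Xf → ℝ)) → Xl → Al → ℝ)
    (θf : ℕ → ((Xl → ℝ) × (Xf → ℝ)) → Xf → Af → ℝ)
    (F : ((Xl → ℝ) × (Xf → ℝ)) → (Xl → Al → ℝ) → (Xf → Af → ℝ) → (Al × Af) →
      ((Xl → ℝ) × (Xf → ℝ)))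
    (b0 : (Xl → ℝ) × (Xf → ℝ)) (a : ℕ → Al × Af) : ℕ → (Xl → ℝ) × (Xf → ℝ)
  | 0 => b0
  | t + 1 => F (μbel θl θf F b0 a t) (θl t (μbel θl θf F b0 a t))
      (θf t (μbel θl θf F b0 a t)) (a t)


lemma mubel_congr {Xl Xf Al Af : Type}
    (θl : ℕ → ((Xl → ℝ) × (Xf → ℝ)) → Xl → Al → ℝ)
    (θf : ℕ → ((Xl → ℝ) × (Xf → ℝ)) → Xf → Af → ℝ)
    (F : ((Xl → ℝ) × (Xf → ℝ)) → (Xl → Al → ℝ) → (Xf → Af → ℝ) → (Al × Af) →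
      ((Xl → ℝ) × (Xf → ℝ)))
    (b0 : (Xl → ℝ) × (Xf → ℝ)) :
    ∀ (t : ℕ) (a a' : ℕ → Al × Af), (∀ n, n < t → a n = a' n) →
      μbel θl θf F b0 a t = μbel θl θf F b0 a' t := by
  intro t
  induction t with
  | zero => intro a a' _; rfl
  | succ t ih =>
    intro a a' h
    simp only [μbel, ih a a' (fun n hn => h n (Nat.lt_succ_of_lt hn)),
      h t (Nat.lt_succ_self t)]

lemma sum_reorder3 {Xl Al Af : Type} [Fintype Xl] [Fintype Al] [Fintype Af]
    (f : Xl → Al → Af → ℝ) :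
    ∑ xl : Xl, ∑ al : Al, ∑ af : Af, f xl al af
      = ∑ al : Al, ∑ af : Af, ∑ xl : Xl, f xl al af := by
  rw [Finset.sum_comm]
  exact Finset.sum_congr rfl fun al _ => Finset.sum_comm

lemma stage_key_aux {Xl Xf : Type} [Fintype Xl] [Fintype Xf]
    (w p fb : Xl → ℝ) (QL : Xl → Xl → ℝ) (Qf' : Xf → ℝ) (G : Xl → Xf → ℝ)
    (hfb : ∀ xl', fb xl' * (∑ xl, w xl * p xl) = ∑ xl, w xl * p xl * QL xl xl') :
    (∑ xl, w xl * p xl) * (∑ xf', Qf' xf' * ∑ xl', fb xl' * G xl' xf')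
      = ∑ xl, w xl * p xl * ∑ xl', ∑ xf', QL xl xl' * Qf' xf' * G xl' xf' := by
  calc (∑ xl, w xl * p xl) * (∑ xf', Qf' xf' * ∑ xl', fb xl' * G xl' xf')
      = ∑ xf', ∑ xl', (∑ xl, w xl * p xl * QL xl xl') * (Qf' xf' * G xl' xf') := by
        simp only [Finset.mul_sum]
        refine Finset.sum_congr rfl fun xf' _ => Finset.sum_congr rfl fun xl' _ => ?_
        rw [← hfb xl']
        ring
    _ = ∑ xf', ∑ xl', ∑ xl, (w xl * p xl * QL xl xl') * (Qf' xf' * G xl' xf') := by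
        simp only [Finset.sum_mul]
    _ = ∑ xl', ∑ xf', ∑ xl, (w xl * p xl * QL xl xl') * (Qf' xf' * G xl' xf') :=
        Finset.sum_comm
    _ = ∑ xl', ∑ xl, ∑ xf', (w xl * p xl * QL xl xl') * (Qf' xf' * G xl' xf') :=
        Finset.sum_congr rfl fun xl' _ => Finset.sum_comm
    _ = ∑ xl, ∑ xl', ∑ xf', (w xl * p xl * QL xl xl') * (Qf' xf' * G xl' xf') :=
        Finset.sum_comm
    _ = ∑ xl, w xl * p xl * ∑ xl', ∑ xf', QL xl xl' * Qf' xf' * G xl' xf' := by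
        simp only [Finset.mul_sum]
        exact Finset.sum_congr rfl fun xl _ => Finset.sum_congr rfl fun xl' _ =>
          Finset.sum_congr rfl fun xf' _ => by ring

lemma stage_aux {Xl Xf : Type} [Fintype Xl] [Fintype Xf]
    (w p fb : Xl → ℝ) (q : ℝ) (R : Xl → ℝ) (QL : Xl → Xl → ℝ)
    (Qf' : Xf → ℝ) (G : Xl → Xf → ℝ)
    (hfb : ∀ xl', fb xl' * (∑ xl, w xl * p xl) = ∑ xl, w xl * p xl * QL xl xl') :
    ∑ xl, w xl * p xl * q * (R xl + ∑ xf', Qf' xf' * ∑ xl', fb xl' * G xl' xf')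
      = ∑ xl, w xl * (p xl * q *
          (R xl + ∑ xl', ∑ xf', QL xl xl' * Qf' xf' * G xl' xf')) := by
  have h := stage_key_aux w p fb QL Qf' G hfb
  calc ∑ xl, w xl * p xl * q * (R xl + ∑ xf', Qf' xf' * ∑ xl', fb xl' * G xl' xf')
      = (∑ xl, w xl * p xl * q * R xl)
          + ((∑ xl, w xl * p xl) * (∑ xf', Qf' xf' * ∑ xl', fb xl' * G xl' xf')) * q := by
        simp only [mul_add, Finset.sum_add_distrib]
        congr 1
        rw [Finset.sum_mul, Finset.sum_mul]
        exact Finset.sum_congr rfl fun xl _ => by ring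
    _ = (∑ xl, w xl * p xl * q * R xl)
          + (∑ xl, w xl * p xl * ∑ xl', ∑ xf', QL xl xl' * Qf' xf' * G xl' xf') * q := by
        rw [h]
    _ = ∑ xl, w xl * (p xl * q *
          (R xl + ∑ xl', ∑ xf', QL xl xl' * Qf' xf' * G xl' xf')) := by
        rw [Finset.sum_mul, ← Finset.sum_add_distrib]
        exact Finset.sum_congr rfl fun xl _ => by ring

/-- the value function produced by the backward recursion equals the reward-to-go
of the strategies constructed by the forward recursion, at every follower history.
The hypothesis `hF` says that the leader marginal of `F` is the Bayes update (stated
multiplicatively, so it also covers zero-probability actions). -/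
theorem backward_value_equals_reward_to_go
    {Xl Xf Al Af : Type} [Fintype Xl] [Fintype Xf] [Fintype Al] [Fintype Af]
    (T : ℕ)
    (θl : ℕ → ((Xl → ℝ) × (Xf → ℝ)) → Xl → Al → ℝ)
    (θf : ℕ → ((Xl → ℝ) × (Xf → ℝ)) → Xf → Af → ℝ)
    (F : ((Xl → ℝ) × (Xf → ℝ)) → (Xl → Al → ℝ) → (Xf → Af → ℝ) → (Al × Af) →
      ((Xl → ℝ) × (Xf → ℝ)))
    (Ql : Xl → Al × Af → Xl → ℝ) (Qf : Xf → Al × Af → Xf → ℝ)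
    (Rf : ℕ → Xl × Xf → Al × Af → ℝ)
    (b0 : (Xl → ℝ) × (Xf → ℝ))
    (hb0 : (∀ xl, 0 ≤ b0.1 xl) ∧ ∑ xl, b0.1 xl = 1)
    (hθl : ∀ t b xl, (∀ al, 0 ≤ θl t b xl al) ∧ ∑ al, θl t b xl al = 1)
    (hθf : ∀ t b xf, (∀ af, 0 ≤ θf t b xf af) ∧ ∑ af, θf t b xf af = 1)
    (hQl : ∀ x u, (∀ x', 0 ≤ Ql x u x') ∧ ∑ x', Ql x u x' = 1)
    (hQf : ∀ x u, (∀ x', 0 ≤ Qf x u x') ∧ ∑ x', Qf x u x' = 1)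
    -- `F` is the strategy-independent Bayesian belief update (leader marginal)
    (hF : ∀ b gl gf u xl',
      (F b gl gf u).1 xl' * (∑ xl, b.1 xl * gl xl u.1)
        = ∑ xl, b.1 xl * gl xl u.1 * Ql xl u xl')
    (hFpos : ∀ b gl gf u, (∀ xl, 0 ≤ b.1 xl) → ∀ xl', 0 ≤ (F b gl gf u).1 xl') :
    ∀ t, t ≤ T → ∀ (a : ℕ → Al × Af) (xfh : ℕ → Xf),
      Vrec θl θf F Qf Rf (T - t) t (μbel θl θf F b0 a t) (xfh t)
        = ∑ xl, (μbel θl θf F b0 a t).1 xl *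
            rtgF (fun t a xl al => θl t (μbel θl θf F b0 a t) xl al)
                 (fun t a xfh af => θf t (μbel θl θf F b0 a t) (xfh t) af)
                 Ql Qf Rf (T - t) t a xfh xl := by
  have key : ∀ (k t : ℕ) (a : ℕ → Al × Af) (xfh : ℕ → Xf),
      Vrec θl θf F Qf Rf k t (μbel θl θf F b0 a t) (xfh t)
        = ∑ xl, (μbel θl θf F b0 a t).1 xl *
            rtgF (fun t a xl al => θl t (μbel θl θf F b0 a t) xl al)
                 (fun t a xfh af => θf t (μbel θl θf F b0 a t) (xfh t) af)
                 Ql Qf Rf k t a xfh xl := by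
    intro k
    induction k with
    | zero => intro t a xfh; simp [Vrec, rtgF]
    | succ k ih =>
      intro t a xfh
      have hnext : ∀ u : Al × Af, μbel θl θf F b0 (upd a t u) (t + 1)
          = F (μbel θl θf F b0 a t) (θl t (μbel θl θf F b0 a t))
              (θf t (μbel θl θf F b0 a t)) u := by
        intro u
        have hcongr := mubel_congr θl θf F b0 t (upd a t u) a
          (fun n hn => by simp [upd, Nat.ne_of_lt hn])
        simp [μbel, hcongr, upd]
      have hIH : ∀ (al : Al) (af : Af) (xf' : Xf),
          Vrec θl θf F Qf Rf k (t + 1)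
              (F (μbel θl θf F b0 a t) (θl t (μbel θl θf F b0 a t))
                (θf t (μbel θl θf F b0 a t)) (al, af)) xf'
            = ∑ xl', (F (μbel θl θf F b0 a t) (θl t (μbel θl θf F b0 a t))
                (θf t (μbel θl θf F b0 a t)) (al, af)).1 xl' *
                rtgF (fun t a xl al => θl t (μbel θl θf F b0 a t) xl al)
                     (fun t a xfh af => θf t (μbel θl θf F b0 a t) (xfh t) af)
                     Ql Qf Rf k (t + 1) (upd a t (al, af)) (upd xfh (t + 1) xf') xl' := by
        intro al af xf'
        have h := ih (t + 1) (upd a t (al, af)) (upd xfh (t + 1) xf')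
        rw [hnext (al, af)] at h
        simpa [upd] using h
      simp only [Vrec, rtgF, hIH]
      rw [sum_reorder3]
      calc ∑ al : Al, ∑ af : Af, ∑ xl : Xl,
            (μbel θl θf F b0 a t).1 xl * θl t (μbel θl θf F b0 a t) xl al *
              θf t (μbel θl θf F b0 a t) (xfh t) af *
              (Rf t (xl, xfh t) (al, af) +
                ∑ xf' : Xf, Qf (xfh t) (al, af) xf' *
                  ∑ xl' : Xl, (F (μbel θl θf F b0 a t) (θl t (μbel θl θf F b0 a t))
                      (θf t (μbel θl θf F b0 a t)) (al, af)).1 xl' *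
                    rtgF (fun t a xl al => θl t (μbel θl θf F b0 a t) xl al)
                         (fun t a xfh af => θf t (μbel θl θf F b0 a t) (xfh t) af)
                         Ql Qf Rf k (t + 1) (upd a t (al, af)) (upd xfh (t + 1) xf') xl')
          = ∑ al : Al, ∑ af : Af, ∑ xl : Xl,
              (μbel θl θf F b0 a t).1 xl * (θl t (μbel θl θf F b0 a t) xl al *
                θf t (μbel θl θf F b0 a t) (xfh t) af *
                (Rf t (xl, xfh t) (al, af) +
                  ∑ xl' : Xl, ∑ xf' : Xf, Ql xl (al, af) xl' * Qf (xfh t) (al, af) xf' *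
                    rtgF (fun t a xl al => θl t (μbel θl θf F b0 a t) xl al)
                         (fun t a xfh af => θf t (μbel θl θf F b0 a t) (xfh t) af)
                         Ql Qf Rf k (t + 1) (upd a t (al, af)) (upd xfh (t + 1) xf') xl')) := by
            refine Finset.sum_congr rfl fun al _ => Finset.sum_congr rfl fun af _ => ?_
            refine stage_aux (μbel θl θf F b0 a t).1
              (fun xl => θl t (μbel θl θf F b0 a t) xl al)
              (F (μbel θl θf F b0 a t) (θl t (μbel θl θf F b0 a t))
                (θf t (μbel θl θf F b0 a t)) (al, af)).1
              (θf t (μbel θl θf F b0 a t) (xfh t) af)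
              (fun xl => Rf t (xl, xfh t) (al, af))
              (fun xl xl' => Ql xl (al, af) xl')
              (fun xf' => Qf (xfh t) (al, af) xf')
              (fun xl' xf' => rtgF (fun t a xl al => θl t (μbel θl θf F b0 a t) xl al)
                (fun t a xfh af => θf t (μbel θl θf F b0 a t) (xfh t) af)
                Ql Qf Rf k (t + 1) (upd a t (al, af)) (upd xfh (t + 1) xf') xl')
              (fun xl' => hF (μbel θl θf F b0 a t) (θl t (μbel θl θf F b0 a t))
                (θf t (μbel θl θf F b0 a t)) (al, af) xl')
        _ = ∑ xl : Xl, ∑ al : Al, ∑ af : Af,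
              (μbel θl θf F b0 a t).1 xl * (θl t (μbel θl θf F b0 a t) xl al *
                θf t (μbel θl θf F b0 a t) (xfh t) af *
                (Rf t (xl, xfh t) (al, af) +
                  ∑ xl' : Xl, ∑ xf' : Xf, Ql xl (al, af) xl' * Qf (xfh t) (al, af) xf' *
                    rtgF (fun t a xl al => θl t (μbel θl θf F b0 a t) xl al)
                         (fun t a xfh af => θf t (μbel θl θf F b0 a t) (xfh t) af)
                         Ql Qf Rf k (t + 1) (upd a t (al, af)) (upd xfh (t + 1) xf') xl')) :=
            (sum_reorder3 _).symm
        _ = ∑ xl : Xl, (μbel θl θf F b0 a t).1 xl *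
              ∑ al : Al, ∑ af : Af, θl t (μbel θl θf F b0 a t) xl al *
                θf t (μbel θl θf F b0 a t) (xfh t) af *
                (Rf t (xl, xfh t) (al, af) +
                  ∑ xl' : Xl, ∑ xf' : Xf, Ql xl (al, af) xl' * Qf (xfh t) (al, af) xf' *
                    rtgF (fun t a xl al => θl t (μbel θl θf F b0 a t) xl al)
                         (fun t a xfh af => θf t (μbel θl θf F b0 a t) (xfh t) af)
                         Ql Qf Rf k (t + 1) (upd a t (al, af)) (upd xfh (t + 1) xf') xl') := by
            simp only [Finset.mul_sum]
  intro t _ a xfh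
  exact key (T - t) t a xfh


end
end

section
/- In the two-player model with conditionally independent controlled Markov types, fix equilibrium leader strategy σ̃^l of the form σ̃_t^l(a^l | a_{1:t-1}, x_t^l) and an arbitrary follower strategy σ^f. Then for every t, action history a_{1:t} and follower type history x_{1:t+1}^f with positive probability, the conditional law of (X_{t+1}^l, A_{t+1:T}, X_{t+2:T}) given (a_{1:t}, x_{1:t+1}^f) under (σ_{t:T}^f, σ̃_{t:T}^l) starting from belief µ_t[a_{1:t-1}] equals the conditional law under (σ_{t+1:T}^f, σ̃_{t+1:T}^l) starting from the updated belief µ_{t+1}[a_{1:t}] = F(µ_t[a_{1:t-1}], σ̃_t(·|a_{1:t-1},·), a_t). In particular, E^{σ_{t:T}^f σ̃_{t:T}^l, µ_t}[ Σ_{n=t+1}^T R_n^f(X_n,A_n) | a_{1:t}, x_{1:t+1}^f ] = E^{σ_{t+1:T}^f σ̃_{t+1:T}^l, µ_{t+1}}[ Σ_{n=t+1}^T R_n^f(X_n,A_n) | a_{1:t}, x_{1:t+1}^f ], and this quantity does not depend on σ_t^f. -/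
open Finset

noncomputable section

/-- Density of a fully specified continuation trajectory (actions and both players' types)
over `k` stages starting at time `t`. -/
def pathdens {Xl Xf Al Af : Type}
    (σl : ℕ → (ℕ → Al × Af) → Xl → Al → ℝ)
    (σf : ℕ → (ℕ → Al × Af) → (ℕ → Xf) → Af → ℝ)
    (Ql : Xl → Al × Af → Xl → ℝ) (Qf : Xf → Al × Af → Xf → ℝ) :
    ℕ → ℕ → (ℕ → Al × Af) → (ℕ → Xf) → (ℕ → Xl) → ℝ
  | 0, _, _, _, _ => 1
  | k + 1, t, a, xfh, xlh =>
      σl t a (xlh t) (a t).1 * σf t a xfh (a t).2 *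
        Ql (xlh t) (a t) (xlh (t + 1)) * Qf (xfh t) (a t) (xfh (t + 1)) *
        pathdens σl σf Ql Qf k (t + 1) a xfh xlh

lemma rtgF_congr {Xl Xf Al Af : Type} [Fintype Xl] [Fintype Xf] [Fintype Al] [Fintype Af]
    (σl : ℕ → (ℕ → Al × Af) → Xl → Al → ℝ)
    (σf σf' : ℕ → (ℕ → Al × Af) → (ℕ → Xf) → Af → ℝ)
    (Ql : Xl → Al × Af → Xl → ℝ) (Qf : Xf → Al × Af → Xf → ℝ)
    (Rf : ℕ → Xl × Xf → Al × Af → ℝ) :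
    ∀ (k s : ℕ) (a : ℕ → Al × Af) (xfh : ℕ → Xf) (xl : Xl),
      (∀ n, s ≤ n → σf' n = σf n) →
      rtgF σl σf' Ql Qf Rf k s a xfh xl = rtgF σl σf Ql Qf Rf k s a xfh xl := by
  intro k
  induction k with
  | zero => intro s a xfh xl h; rfl
  | succ k ih =>
      intro s a xfh xl h
      simp only [rtgF, h s le_rfl]
      refine Finset.sum_congr rfl fun al _ => Finset.sum_congr rfl fun af _ => ?_
      congr 1
      refine congrArg _ (Finset.sum_congr rfl fun xl' _ => Finset.sum_congr rfl fun xf' _ => ?_)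
      rw [ih (s + 1) _ _ _ (fun n hn => h n (Nat.le_of_succ_le hn))]

/-- Lemma 3: strategy-independence of continuation payoffs.  Under the Markov
equilibrium leader strategy `σtl` and an arbitrary follower strategy `σf`, the conditional law
of `(X_{t+1}^l, A_{t+1:T}, X_{t+2:T})` given `(a_{1:t}, x_{1:t+1}^f)` started from the
time-`t` belief equals the law started from the updated belief `μ_{t+1}`; in particular the
continuation payoffs coincide and do not depend on the time-`t` follower strategy. -/
theorem continuation_independent_of_current_strategy
    {Xl Xf Al Af : Type} [Fintype Xl] [Fintype Xf] [Fintype Al] [Fintype Af]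
    (T t : ℕ) (ht : t + 1 ≤ T)
    (σtl : ℕ → (ℕ → Al × Af) → Xl → Al → ℝ)
    (σf : ℕ → (ℕ → Al × Af) → (ℕ → Xf) → Af → ℝ)
    (Ql : Xl → Al × Af → Xl → ℝ) (Qf : Xf → Al × Af → Xf → ℝ)
    (Rf : ℕ → Xl × Xf → Al × Af → ℝ)
    (μ : ℕ → (ℕ → Al × Af) → Xl → ℝ)
    (a : ℕ → Al × Af) (xfh : ℕ → Xf)
    -- the belief is updated by the strategy-independent map F (Bayes rule for the leader
    -- marginal, stated multiplicatively)
    (hBayes : ∀ y : Xl,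
      μ (t + 1) a y * (∑ xl, μ t a xl * σtl t a xl (a t).1)
        = ∑ xl, μ t a xl * σtl t a xl (a t).1 * Ql xl (a t) y)
    -- the history (a_{1:t}, x_{1:t+1}^f) has positive probability
    (hden : 0 < ∑ xl, μ t a xl * σtl t a xl (a t).1 * σf t a xfh (a t).2 *
        Qf (xfh t) (a t) (xfh (t + 1))) :
    -- (1) equality of conditional laws of the full continuation trajectory
    (∀ xlh : ℕ → Xl,
      (∑ xl, μ t a xl * σtl t a xl (a t).1 * σf t a xfh (a t).2 *
          Ql xl (a t) (xlh (t + 1)) * Qf (xfh t) (a t) (xfh (t + 1)) *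
          pathdens σtl σf Ql Qf (T - (t + 1)) (t + 1) a xfh xlh) /
        (∑ xl, μ t a xl * σtl t a xl (a t).1 * σf t a xfh (a t).2 *
          Qf (xfh t) (a t) (xfh (t + 1)))
      = μ (t + 1) a (xlh (t + 1)) *
          pathdens σtl σf Ql Qf (T - (t + 1)) (t + 1) a xfh xlh) ∧
    -- (2) equality of continuation payoffs: conditioning from time t with belief μ_t
    -- equals restarting at time t+1 with belief μ_{t+1}
    ((∑ xl, ∑ xl', μ t a xl * σtl t a xl (a t).1 * Ql xl (a t) xl' *
        rtgF σtl σf Ql Qf Rf (T - (t + 1)) (t + 1) a xfh xl')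
      = (∑ xl, μ t a xl * σtl t a xl (a t).1) *
        ∑ xl', μ (t + 1) a xl' *
          rtgF σtl σf Ql Qf Rf (T - (t + 1)) (t + 1) a xfh xl') ∧
    -- (3) the continuation payoff does not depend on the time-t follower strategy
    (∀ σf' : ℕ → (ℕ → Al × Af) → (ℕ → Xf) → Af → ℝ,
      (∀ n, n ≠ t → σf' n = σf n) →
      (∑ xl, ∑ xl', μ t a xl * σtl t a xl (a t).1 * Ql xl (a t) xl' *
          rtgF σtl σf' Ql Qf Rf (T - (t + 1)) (t + 1) a xfh xl')
        = ∑ xl, ∑ xl', μ t a xl * σtl t a xl (a t).1 * Ql xl (a t) xl' *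
            rtgF σtl σf Ql Qf Rf (T - (t + 1)) (t + 1) a xfh xl') := by
  -- abbreviations
  set S : ℝ := ∑ xl, μ t a xl * σtl t a xl (a t).1 with hS
  set c : ℝ := σf t a xfh (a t).2 * Qf (xfh t) (a t) (xfh (t + 1)) with hc
  have hden' : (∑ xl, μ t a xl * σtl t a xl (a t).1 * σf t a xfh (a t).2 *
      Qf (xfh t) (a t) (xfh (t + 1))) = S * c := by
    rw [hS, hc, Finset.sum_mul]
    exact Finset.sum_congr rfl fun xl _ => by ring
  have hSc : 0 < S * c := hden' ▸ hden
  have hcne : c ≠ 0 := by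
    intro h0; rw [h0, mul_zero] at hSc; exact lt_irrefl 0 hSc
  have hSne : S ≠ 0 := by
    intro h0; rw [h0, zero_mul] at hSc; exact lt_irrefl 0 hSc
  refine ⟨?_, ?_, ?_⟩
  · intro xlh
    have hnum : (∑ xl, μ t a xl * σtl t a xl (a t).1 * σf t a xfh (a t).2 *
        Ql xl (a t) (xlh (t + 1)) * Qf (xfh t) (a t) (xfh (t + 1)) *
        pathdens σtl σf Ql Qf (T - (t + 1)) (t + 1) a xfh xlh)
        = (∑ xl, μ t a xl * σtl t a xl (a t).1 * Ql xl (a t) (xlh (t + 1))) *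
          (c * pathdens σtl σf Ql Qf (T - (t + 1)) (t + 1) a xfh xlh) := by
      rw [Finset.sum_mul, hc]
      exact Finset.sum_congr rfl fun xl _ => by ring
    rw [hnum, hden', ← hBayes (xlh (t + 1))]
    field_simp
  · rw [Finset.sum_comm]
    have : ∀ xl' : Xl, (∑ xl, μ t a xl * σtl t a xl (a t).1 * Ql xl (a t) xl' *
        rtgF σtl σf Ql Qf Rf (T - (t + 1)) (t + 1) a xfh xl')
        = μ (t + 1) a xl' * S * rtgF σtl σf Ql Qf Rf (T - (t + 1)) (t + 1) a xfh xl' := by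
      intro xl'
      rw [← Finset.sum_mul, ← hBayes xl']
    rw [Finset.sum_congr rfl fun xl' _ => this xl', Finset.mul_sum]
    exact Finset.sum_congr rfl fun xl' _ => by ring
  · intro σf' hσ
    have : ∀ xl' : Xl, rtgF σtl σf' Ql Qf Rf (T - (t + 1)) (t + 1) a xfh xl'
        = rtgF σtl σf Ql Qf Rf (T - (t + 1)) (t + 1) a xfh xl' := fun xl' =>
      rtgF_congr σtl σf σf' Ql Qf Rf _ _ _ _ _
        (fun n hn => hσ n (by omega))
    simp only [this]

end
end
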